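/- Consider a conservative mass-action system in which every semi-locking set contains the support of a semi-conservation vector. Then the system is persistent: for every x₀ ∈ ℝ^m_{>0}, the ω-limit set ω(x₀) of the forward solution of ẋ = Γ R(x) with x(0) = x₀ satisfies ω(x₀) ∩ ∂ℝ^m_{>0} = ∅. -/

import Mathlib

open scoped BigOperators
open Matrix Filter

/-- The stoichiometric matrix `Γ ∈ ℝ^{m×r}`, `Γ j i = β i j - α i j`. -/
noncomputable def Gamma {m r : ℕ} (a b : Fin r → Fin m → ℕ) : Matrix (Fin m) (Fin r) ℝ :=
  fun j i => (b i j : ℝ) - (a i j : ℝ)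

/-- Mass-action reaction rates `R_i(x) = k_i ∏_j x_j^{α_{ij}}`. -/
noncomputable def rate {m r : ℕ} (a : Fin r → Fin m → ℕ) (k : Fin r → ℝ)
    (x : Fin m → ℝ) : Fin r → ℝ :=
  fun i => k i * ∏ j, x j ^ (a i j)

/-- A nonempty `I` is a semi-locking set (siphon) if every reaction producing a species
in `I` consumes a species in `I`. -/
def IsSemiLocking {m r : ℕ} (a b : Fin r → Fin m → ℕ) (I : Set (Fin m)) : Prop :=
  I.Nonempty ∧ ∀ i : Fin r, (∃ j ∈ I, 0 < b i j) → ∃ l ∈ I, 0 < a i l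

/-- A nonempty `I` is a locking set (deadlock) if every reaction consumes a species in `I`. -/
def IsLocking {m r : ℕ} (a : Fin r → Fin m → ℕ) (I : Set (Fin m)) : Prop :=
  I.Nonempty ∧ ∀ i : Fin r, ∃ l ∈ I, 0 < a i l

/-- `L_I = {x ∈ ℝ^m_{≥0} : x_i = 0 for i ∈ I, x_i > 0 for i ∉ I}`. -/
def LI {m : ℕ} (I : Set (Fin m)) : Set (Fin m → ℝ) :=
  {x | (∀ i, 0 ≤ x i) ∧ (∀ i ∈ I, x i = 0) ∧ ∀ i ∉ I, 0 < x i}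

/-- Boundary of the positive orthant of `ℝ^m`. -/
def posBoundary (m : ℕ) : Set (Fin m → ℝ) :=
  {x | (∀ i, 0 ≤ x i) ∧ ∃ i, x i = 0}

/-- The stoichiometric subspace `S = range Γ`. -/
noncomputable def stoichSubspace {m r : ℕ} (a b : Fin r → Fin m → ℕ) :
    Submodule ℝ (Fin m → ℝ) :=
  LinearMap.range (Gamma a b).mulVecLin

/-- The positive stoichiometric compatibility class `C_{x₀} = (x₀ + S) ∩ ℝ^m_{>0}`. -/
def compatClass {m r : ℕ} (a b : Fin r → Fin m → ℕ) (x₀ : Fin m → ℝ) :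
    Set (Fin m → ℝ) :=
  {x | (∀ i, 0 < x i) ∧ x - x₀ ∈ stoichSubspace a b}

/-- `F_I = closure(C_{x₀}) ∩ L_I`. -/
def FI {m r : ℕ} (a b : Fin r → Fin m → ℕ) (x₀ : Fin m → ℝ) (I : Set (Fin m)) :
    Set (Fin m → ℝ) :=
  closure (compatClass a b x₀) ∩ LI I

/-- The dimension of the affine hull of a set in `ℝ^m`. -/
noncomputable def setDim {m : ℕ} (F : Set (Fin m → ℝ)) : ℕ :=
  Module.finrank ℝ (affineSpan ℝ F).direction

/-- `F` is a facet of a compatibility class: nonempty with affine-hull dimension `s - 1`,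
where `s = rank Γ`. -/
def IsFacet {m r : ℕ} (a b : Fin r → Fin m → ℕ) (F : Set (Fin m → ℝ)) : Prop :=
  F.Nonempty ∧ setDim F = (Gamma a b).rank - 1

/-- `F` is a vertex: nonempty with affine-hull dimension `0`. -/
def IsVertex {m : ℕ} (F : Set (Fin m → ℝ)) : Prop :=
  F.Nonempty ∧ setDim F = 0

/-- A global forward solution of the mass-action system `ẋ = Γ R(x)`. -/
def IsForwardSolution {m r : ℕ} (a b : Fin r → Fin m → ℕ) (k : Fin r → ℝ)
    (x : ℝ → Fin m → ℝ) : Prop :=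
  ∀ t : ℝ, 0 ≤ t → HasDerivAt x ((Gamma a b).mulVec (rate a k (x t))) t

/-- The ω-limit set of a forward trajectory. -/
def omegaLimitSet {m : ℕ} (x : ℝ → Fin m → ℝ) : Set (Fin m → ℝ) :=
  {y | MapClusterPt y atTop x}

/-- `R_i ≼_I R_j` : `α i l ≥ α j l` for all `l ∈ I`, strict for some `l ∈ I`. -/
def prec {m r : ℕ} (a : Fin r → Fin m → ℕ) (I : Set (Fin m)) (i j : Fin r) : Prop :=
  (∀ l ∈ I, a j l ≤ a i l) ∧ ∃ l ∈ I, a j l < a i l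

/-- `R_I = {(i,j) : R_i ≼_I R_j}`. -/
def precSet {m r : ℕ} (a : Fin r → Fin m → ℕ) (I : Set (Fin m)) : Set (Fin r × Fin r) :=
  {p | prec a I p.1 p.2}

/-- The feasibility cone relative to `J`. -/
def feasCone {r : ℕ} (J : Set (Fin r × Fin r)) (ε : ℝ) : Set (Fin r → ℝ) :=
  {v | (∀ i, 0 ≤ v i) ∧ ∀ p ∈ J, v p.1 ≤ ε * v p.2}

/-- The criticality cone `C(I)`. -/
def critCone {m r : ℕ} (a b : Fin r → Fin m → ℕ) (I : Set (Fin m)) : Set (Fin r → ℝ) :=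
  {v | (∀ i, 0 ≤ v i) ∧ ∀ l ∈ I, (Gamma a b).mulVec v l ≤ 0}

/-- `ker(I,J,ε)`. -/
def kerIJ {m r : ℕ} (a b : Fin r → Fin m → ℕ) (I : Set (Fin m))
    (J : Set (Fin r × Fin r)) (ε : ℝ) : Set (Fin r → ℝ) :=
  {v | (∀ i, 0 ≤ v i) ∧ (∀ l ∈ I, (Gamma a b).mulVec v l = 0) ∧ ∀ p ∈ J, v p.1 = ε * v p.2}

/-- Dynamical non-emptiability (Angeli–De Leenheer–Sontag): `F_ε(I) ∩ C(I) = {0}`. -/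
def DynNonEmptiable {m r : ℕ} (a b : Fin r → Fin m → ℕ) (I : Set (Fin m)) : Prop :=
  ∃ ε > (0:ℝ), critCone a b I ∩ feasCone (precSet a I) ε = {0}

/-- Weak dynamical non-emptiability: `C(I) ∩ F_ε(J) ⊆ ker(I,J,ε)` for some `ε > 0`, `J ⊆ R_I`. -/
def WeaklyDynNonEmptiable {m r : ℕ} (a b : Fin r → Fin m → ℕ) (I : Set (Fin m)) : Prop :=
  ∃ ε > (0:ℝ), ∃ J ⊆ precSet a I, critCone a b I ∩ feasCone J ε ⊆ kerIJ a b I J ε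

/-- `I` contains the support of a semi-conservation vector. -/
def ContainsSemiConsSupport {m r : ℕ} (a b : Fin r → Fin m → ℕ) (I : Set (Fin m)) : Prop :=
  ∃ c : Fin m → ℝ, (∀ i, 0 ≤ c i) ∧ (∃ i, 0 < c i) ∧
    Matrix.vecMul c (Gamma a b) = 0 ∧ ∀ i, 0 < c i → i ∈ I

/-- A semi-locking set is critical if it contains no support of a semi-conservation vector. -/
def IsCritical {m r : ℕ} (a b : Fin r → Fin m → ℕ) (I : Set (Fin m)) : Prop :=
  ¬ ContainsSemiConsSupport a b I

/-- Weak reversibility: in the directed reaction graph on complexes, the reactant complex of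
every reaction is reachable from its product complex (equivalently, every connected
component is strongly connected). -/
def WeaklyReversible {m r : ℕ} (a b : Fin r → Fin m → ℕ) : Prop :=
  ∀ i : Fin r,
    Relation.ReflTransGen (fun y z : Fin m → ℕ => ∃ i', a i' = y ∧ b i' = z) (b i) (a i)

/-- The system is conservative: `cᵀ Γ = 0` for some strictly positive `c`. -/
def Conservative {m r : ℕ} (a b : Fin r → Fin m → ℕ) : Prop :=
  ∃ c : Fin m → ℝ, (∀ i, 0 < c i) ∧ Matrix.vecMul c (Gamma a b) = 0

/-!
A positive conservation law confines solutions to a compact box, on which the consumption of a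
species `j` is at most a constant times `x j`; a Gronwall estimate then keeps solutions started in
the open orthant positive. If an ω-limit point `y` lay on the boundary, its zero set would be a
siphon: otherwise some reaction producing a species `j` with `y j = 0` runs at a positive rate at
`y` while every reaction consuming `j` vanishes there, so `ẋ j` is bounded below by a positive constant near
`y`. Since the trajectory has bounded speed, before each close approach to `y` it spends a time
of fixed length near `y`, which pushes `x j` away from `0`. A semi-conservation vector `c`
supported in that siphon finally gives `c ⬝ᵥ y = 0 < c ⬝ᵥ x₀`, while `c ⬝ᵥ x t = c ⬝ᵥ x₀` along
the whole trajectory.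
-/

open Set

section Rates

variable {m r : ℕ} {a b : Fin r → Fin m → ℕ} {k : Fin r → ℝ} {z : Fin m → ℝ} {i : Fin r}
  {j : Fin m}

lemma Gamma_mulVec_apply (v : Fin r → ℝ) (j : Fin m) :
    (Gamma a b *ᵥ v) j = ∑ i, (b i j : ℝ) * v i - ∑ i, (a i j : ℝ) * v i := by
  simp only [mulVec, dotProduct, Gamma, sub_mul, Finset.sum_sub_distrib]

lemma continuous_Gamma_mulVec_rate : Continuous fun z => Gamma a b *ᵥ rate a k z := by
  unfold rate
  fun_prop

lemma rate_nonneg (hk : ∀ i, 0 ≤ k i) (hz : 0 ≤ z) (i : Fin r) : 0 ≤ rate a k z i :=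
  mul_nonneg (hk i) (Finset.prod_nonneg fun l _ => pow_nonneg (hz l) _)

lemma rate_pos (hk : 0 < k i) (hz : ∀ l, a i l ≠ 0 → 0 < z l) : 0 < rate a k z i := by
  refine mul_pos hk (Finset.prod_pos fun l _ => ?_)
  by_cases hl : a i l = 0
  · simp [hl]
  · exact pow_pos (hz l hl) _

lemma rate_eq_zero (hzj : z j = 0) (hij : a i j ≠ 0) : rate a k z i = 0 := by
  simp only [rate, mul_eq_zero]
  exact Or.inr (Finset.prod_eq_zero (Finset.mem_univ j) (by simp [hzj, hij]))

lemma prod_pow_le_mul_apply {e : Fin m → ℕ} {M : ℝ} (hz : 0 ≤ z) (hzM : ∀ l, z l ≤ M)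
    (hM : 1 ≤ M) (hj : e j ≠ 0) : ∏ l, z l ^ e l ≤ z j * M ^ ∑ l, e l := by
  calc ∏ l, z l ^ e l ≤ ∏ l, (if l = j then z j else 1) * M ^ e l := by
        refine Finset.prod_le_prod (fun l _ => pow_nonneg (hz l) _) fun l _ => ?_
        split_ifs with hl
        · subst hl
          obtain ⟨n, hn⟩ := Nat.exists_eq_succ_of_ne_zero hj
          rw [hn, pow_succ', pow_succ']
          refine mul_le_mul_of_nonneg_left ?_ (hz l)
          exact (pow_le_pow_left₀ (hz l) (hzM l) n).trans
            (le_mul_of_one_le_left (pow_nonneg (zero_le_one.trans hM) n) hM)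
        · rw [one_mul]
          exact pow_le_pow_left₀ (hz l) (hzM l) _
    _ = z j * M ^ ∑ l, e l := by
        rw [Finset.prod_mul_distrib, Finset.prod_ite_eq', Finset.prod_pow_eq_pow_sum]
        simp

lemma exists_neg_mul_le_Gamma_mulVec_rate (hk : ∀ i, 0 ≤ k i) {M : ℝ} (hM : 1 ≤ M)
    (j : Fin m) : ∃ D : ℝ, ∀ z, 0 ≤ z → (∀ l, z l ≤ M) →
      -(D * z j) ≤ (Gamma a b *ᵥ rate a k z) j := by
  refine ⟨∑ i, a i j * (k i * M ^ ∑ l, a i l), fun z hz hzM => ?_⟩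
  have hcons : ∑ i, (a i j : ℝ) * rate a k z i ≤ (∑ i, a i j * (k i * M ^ ∑ l, a i l)) * z j := by
    rw [Finset.sum_mul]
    refine Finset.sum_le_sum fun i _ => ?_
    by_cases hij : a i j = 0
    · simp [hij]
    rw [mul_assoc]
    refine mul_le_mul_of_nonneg_left ?_ (Nat.cast_nonneg _)
    calc rate a k z i ≤ k i * (z j * M ^ ∑ l, a i l) :=
          mul_le_mul_of_nonneg_left (prod_pow_le_mul_apply hz hzM hM hij) (hk i)
      _ = k i * M ^ (∑ l, a i l) * z j := by ring
  have hprod : 0 ≤ ∑ i, (b i j : ℝ) * rate a k z i :=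
    Finset.sum_nonneg fun i _ => mul_nonneg (Nat.cast_nonneg _) (rate_nonneg hk hz i)
  rw [Gamma_mulVec_apply]
  linarith

end Rates

lemma exists_apply_le_of_dotProduct_eq {m : ℕ} {c : Fin m → ℝ} (hc : ∀ l, 0 < c l) (q : ℝ) :
    ∃ M : ℝ, 1 ≤ M ∧ ∀ z : Fin m → ℝ, 0 ≤ z → c ⬝ᵥ z = q → ∀ l, z l ≤ M := by
  refine ⟨1 + ∑ l, |q| / c l, ?_, fun z hz hzq l => ?_⟩
  · linarith [Finset.sum_nonneg fun l (_ : l ∈ Finset.univ) => div_nonneg (abs_nonneg q) (hc l).le]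
  have hl : c l * z l ≤ q :=
    hzq ▸ Finset.single_le_sum (fun l' _ => mul_nonneg (hc l').le (hz l')) (Finset.mem_univ l)
  calc z l ≤ |q| / c l := (le_div_iff₀ (hc l)).2 (by linarith [le_abs_self q])
    _ ≤ ∑ l, |q| / c l :=
        Finset.single_le_sum (fun l _ => div_nonneg (abs_nonneg q) (hc l).le) (Finset.mem_univ l)
    _ ≤ 1 + ∑ l, |q| / c l := le_add_of_nonneg_left zero_le_one

lemma forall_pos_of_forall_Ico_pos {ι : Type*} [Finite ι] {x : ℝ → ι → ℝ}
    (hx : ContinuousOn x (Ici 0))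
    (h : ∀ T, 0 ≤ T → (∀ s ∈ Ico 0 T, ∀ l, 0 < x s l) → ∀ l, 0 < x T l) :
    ∀ t, 0 ≤ t → ∀ l, 0 < x t l := by
  by_contra! hneg
  set Z := Ici 0 ∩ x ⁻¹' {v | ∃ l, v l ≤ 0}
  have hZ : IsClosed Z := by
    refine hx.preimage_isClosed_of_isClosed isClosed_Ici ?_
    simpa only [ofPred_exists] using
      isClosed_iUnion_of_finite fun l => isClosed_le (continuous_apply l) continuous_const
  have hbdd : BddBelow Z := ⟨0, fun t ht => ht.1⟩
  obtain ⟨hT, l, hl⟩ := hZ.csInf_mem hneg hbdd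
  refine (h _ hT (fun s hs l' => ?_) l).not_ge hl
  by_contra! hs'
  exact hs.2.not_ge (csInf_le hbdd ⟨hs.1, l', hs'⟩)

lemma pos_of_neg_mul_le_deriv {f f' : ℝ → ℝ} {D T : ℝ} (hT : 0 ≤ T)
    (hf : ContinuousOn f (Icc 0 T)) (hf' : ∀ s ∈ Ioo 0 T, HasDerivAt f (f' s) s)
    (hD : ∀ s ∈ Ioo 0 T, -(D * f s) ≤ f' s) (h0 : 0 < f 0) : 0 < f T := by
  have hmono : MonotoneOn (fun s => Real.exp (D * s) * f s) (Icc 0 T) := by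
    refine monotoneOn_of_hasDerivWithinAt_nonneg (convex_Icc 0 T)
      (f' := fun s => Real.exp (D * s) * (D * f s + f' s)) (by fun_prop) ?_ ?_ <;>
      rw [interior_Icc] <;> intro s hs
    · have hexp : HasDerivAt (fun s => Real.exp (D * s)) (Real.exp (D * s) * D) s := by
        simpa using ((hasDerivAt_id s).const_mul D).exp
      exact ((hexp.fun_mul (hf' s hs)).congr_deriv (by ring)).hasDerivWithinAt
    · exact mul_nonneg (Real.exp_pos _).le (by linarith [hD s hs])
  have h := hmono (left_mem_Icc.2 hT) (right_mem_Icc.2 hT) hT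
  simp only [mul_zero, Real.exp_zero, one_mul] at h
  exact (mul_pos_iff_of_pos_left (Real.exp_pos _)).1 (h0.trans_le h)

section Trajectories

variable {m r : ℕ} {a b : Fin r → Fin m → ℕ} {k : Fin r → ℝ} {x : ℝ → Fin m → ℝ}

lemma IsForwardSolution.continuousOn (hx : IsForwardSolution a b k x) :
    ContinuousOn x (Ici 0) :=
  fun t ht => (hx t ht).continuousAt.continuousWithinAt

lemma IsForwardSolution.dotProduct_eq (hx : IsForwardSolution a b k x) {c : Fin m → ℝ}
    (hc : c ᵥ* Gamma a b = 0) {t : ℝ} (ht : 0 ≤ t) : c ⬝ᵥ x t = c ⬝ᵥ x 0 := by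
  have hderiv : ∀ s, 0 ≤ s → HasDerivAt (fun s => c ⬝ᵥ x s) 0 s := by
    intro s hs
    have h := HasDerivAt.fun_sum fun l (_ : l ∈ Finset.univ) =>
      (hasDerivAt_pi.1 (hx s hs) l).const_mul (c l)
    rwa [← dotProduct, dotProduct_mulVec, hc, zero_dotProduct] at h
  exact constant_of_has_deriv_right_zero
    (fun s hs => (hderiv s hs.1).continuousAt.continuousWithinAt)
    (fun s hs => (hderiv s hs.1).hasDerivWithinAt) t ⟨ht, le_rfl⟩

lemma IsForwardSolution.pos (hk : ∀ i, 0 ≤ k i) {c : Fin m → ℝ} (hc : ∀ l, 0 < c l)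
    (hcΓ : c ᵥ* Gamma a b = 0) (hx : IsForwardSolution a b k x) (hx0 : ∀ l, 0 < x 0 l) :
    ∀ t, 0 ≤ t → ∀ l, 0 < x t l := by
  obtain ⟨M, hM1, hM⟩ := exists_apply_le_of_dotProduct_eq hc (c ⬝ᵥ x 0)
  refine forall_pos_of_forall_Ico_pos hx.continuousOn fun T hT hpos j => ?_
  obtain ⟨D, hD⟩ := exists_neg_mul_le_Gamma_mulVec_rate (b := b) hk hM1 j
  refine pos_of_neg_mul_le_deriv hT
    ((continuous_apply j).comp_continuousOn (hx.continuousOn.mono Icc_subset_Ici_self))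
    (fun s hs => hasDerivAt_pi.1 (hx s hs.1.le) j) (fun s hs => hD _ ?_ ?_) (hx0 j)
  · exact fun l => (hpos s (Ioo_subset_Ico_self hs) l).le
  · exact hM _ (fun l => (hpos s (Ioo_subset_Ico_self hs) l).le) (hx.dotProduct_eq hcΓ hs.1.le)

end Trajectories

lemma apply_nonpos_of_mem_omegaLimitSet {m : ℕ} {F : (Fin m → ℝ) → Fin m → ℝ}
    (hF : Continuous F) {K : Set (Fin m → ℝ)} (hK : IsCompact K) {x : ℝ → Fin m → ℝ}
    (hx : ∀ t, 0 ≤ t → HasDerivAt x (F (x t)) t) (hxK : ∀ t, 0 ≤ t → x t ∈ K) {j : Fin m}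
    (hxj : ∀ t, 0 ≤ t → 0 ≤ x t j) {y : Fin m → ℝ} (hy : y ∈ omegaLimitSet x)
    (hyj : y j = 0) : F y j ≤ 0 := by
  by_contra! hFy
  set δ := F y j / 2
  obtain ⟨ε, hε, hU⟩ : ∃ ε > 0, ∀ z, dist z y < ε → δ < F z j :=
    Metric.eventually_nhds_iff.1 <| continuousAt_const.eventually_lt
      ((continuous_apply j).comp hF).continuousAt (half_lt_self hFy)
  obtain ⟨L, hL⟩ := hK.exists_bound_of_continuousOn hF.continuousOn
  have hL0 : 0 ≤ L := (norm_nonneg _).trans (hL _ (hxK 0 le_rfl))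
  obtain ⟨h, hh, hLh⟩ : ∃ h > 0, L * h ≤ ε / 2 := ⟨ε / (2 * (L + 1)), by positivity, by
    rw [mul_div_assoc', div_le_div_iff₀ (by positivity) two_pos]
    nlinarith⟩
  obtain ⟨tn, htn, htnh⟩ := ((mapClusterPt_iff_frequently.1 hy _ (Metric.ball_mem_nhds y
    (lt_min (half_pos hε) (mul_pos (half_pos hFy) hh)))).and_eventually
      (eventually_ge_atTop h)).exists
  have htn' : dist (x tn) y < ε / 2 ∧ dist (x tn) y < δ * h := lt_min_iff.1 htn
  -- bounded speed keeps the trajectory within `ε` of `y` during the time `h` before `tn`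
  have hnear : ∀ s ∈ Icc (tn - h) tn, δ < F (x s) j := by
    intro s hs
    have hs0 : 0 ≤ s := by linarith [hs.1]
    have hlip := norm_image_sub_le_of_norm_deriv_le_segment'
      (fun u hu => (hx u (hs0.trans hu.1)).hasDerivWithinAt)
      (fun u hu => hL _ (hxK u (hs0.trans hu.1))) tn ⟨hs.2, le_rfl⟩
    refine hU _ ((dist_triangle _ (x tn) _).trans_lt ?_)
    rw [dist_eq_norm, norm_sub_rev]
    nlinarith [hs.1]
  have hgrowth : δ * (tn - (tn - h)) ≤ x tn j - x (tn - h) j := by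
    have hderiv : ∀ s ∈ Icc (tn - h) tn, HasDerivAt (fun u => x u j) (F (x s) j) s :=
      fun s hs => hasDerivAt_pi.1 (hx s (by linarith [hs.1])) j
    refine (convex_Icc _ _).mul_sub_le_image_sub_of_le_deriv
      (fun s hs => (hderiv s hs).continuousAt.continuousWithinAt)
      (fun s hs => (hderiv s (interior_subset hs)).differentiableAt.differentiableWithinAt)
      (fun s hs => (hderiv s (interior_subset hs)).deriv ▸ (hnear s (interior_subset hs)).le)
      _ ⟨le_rfl, by linarith⟩ _ ⟨by linarith, le_rfl⟩ (by linarith)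
  have hxtn : x tn j < δ * h := by
    have := (dist_le_pi_dist (x tn) y j).trans_lt htn'.2
    rw [Real.dist_eq, hyj, sub_zero, abs_lt] at this
    exact this.2
  linarith [hxj (tn - h) (by linarith)]

lemma exists_Gamma_mulVec_rate_pos_of_not_isSemiLocking {m r : ℕ} {a b : Fin r → Fin m → ℕ}
    {k : Fin r → ℝ} (hk : ∀ i, 0 < k i) {y : Fin m → ℝ} (hy : 0 ≤ y)
    (hy0 : ∃ j, y j = 0) (hI : ¬ IsSemiLocking a b {l | y l = 0}) :
    ∃ j, y j = 0 ∧ 0 < (Gamma a b *ᵥ rate a k y) j := by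
  simp only [IsSemiLocking, not_and, not_forall, not_exists] at hI
  obtain ⟨i, ⟨j, hyj, hbij⟩, hai⟩ := hI hy0
  refine ⟨j, hyj, ?_⟩
  have hcons : ∑ i', (a i' j : ℝ) * rate a k y i' = 0 := by
    refine Finset.sum_eq_zero fun i' _ => ?_
    by_cases hij : a i' j = 0
    · simp [hij]
    · rw [rate_eq_zero hyj hij, mul_zero]
  have hprod : 0 < ∑ i', (b i' j : ℝ) * rate a k y i' := by
    refine Finset.sum_pos' (fun i' _ => mul_nonneg (Nat.cast_nonneg _)
      (rate_nonneg (fun i => (hk i).le) hy i')) ⟨i, Finset.mem_univ i, mul_pos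
        (Nat.cast_pos.2 hbij) (rate_pos (hk i) fun l hl => (hy l).lt_of_ne' fun h0 => ?_)⟩
    exact hai l h0 (Nat.pos_of_ne_zero hl)
  rw [Gamma_mulVec_apply, hcons]
  linarith

/-- a conservative mass-action system in which every semi-locking set contains
the support of a semi-conservation vector is persistent. -/
theorem stmt3 {m r : ℕ} (a b : Fin r → Fin m → ℕ) (k : Fin r → ℝ) (hk : ∀ i, 0 < k i)
    (hcons : Conservative a b)
    (hsemi : ∀ I : Set (Fin m), IsSemiLocking a b I → ContainsSemiConsSupport a b I) :
    ∀ x₀ : Fin m → ℝ, (∀ i, 0 < x₀ i) → ∀ x : ℝ → Fin m → ℝ, x 0 = x₀ →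
      IsForwardSolution a b k x → omegaLimitSet x ∩ posBoundary m = ∅ := by
  rintro x₀ hx₀ x rfl hx
  obtain ⟨c, hc, hcΓ⟩ := hcons
  have hpos := hx.pos (fun i => (hk i).le) hc hcΓ hx₀
  obtain ⟨M, -, hM⟩ := exists_apply_le_of_dotProduct_eq hc (c ⬝ᵥ x 0)
  have hxK : ∀ t, 0 ≤ t → x t ∈ Icc (0 : Fin m → ℝ) fun _ => M := fun t ht =>
    ⟨fun l => (hpos t ht l).le, hM _ (fun l => (hpos t ht l).le) (hx.dotProduct_eq hcΓ ht)⟩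
  refine eq_empty_iff_forall_notMem.2 fun y ⟨hyω, hy, hy0⟩ => ?_
  have hI : IsSemiLocking a b {l | y l = 0} := by
    by_contra hI
    obtain ⟨j, hyj, hFj⟩ := exists_Gamma_mulVec_rate_pos_of_not_isSemiLocking hk hy hy0 hI
    exact hFj.not_ge <| apply_nonpos_of_mem_omegaLimitSet continuous_Gamma_mulVec_rate
      isCompact_Icc hx hxK (fun t ht => (hpos t ht j).le) hyω hyj
  obtain ⟨d, hd, ⟨i, hi⟩, hdΓ, hdI⟩ := hsemi _ hI
  have hdy : d ⬝ᵥ y = d ⬝ᵥ x 0 :=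
    (isClosed_eq (continuous_const.dotProduct continuous_id) continuous_const).mem_of_mapClusterPt
      hyω ((eventually_ge_atTop 0).mono fun t ht => hx.dotProduct_eq hdΓ ht)
  have hdy0 : d ⬝ᵥ y = 0 := Finset.sum_eq_zero fun l _ => by
    rcases (hd l).eq_or_lt with hl | hl
    · rw [← hl, zero_mul]
    · rw [show y l = 0 from hdI l hl, mul_zero]
  have hdx0 : 0 < d ⬝ᵥ x 0 := Finset.sum_pos' (fun l _ => mul_nonneg (hd l) (hx₀ l).le)
    ⟨i, Finset.mem_univ i, mul_pos hi (hx₀ i)⟩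
  linarith
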